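/- Let n ≥ 2 and D ≥ 3 be integers, let a > 0 and F > 0 be fixed reals, let β_0, …, β_n be reals, and set α_p = 2(D−1)(n−p)·β_p − ((D−2)/D)·(p+1)·β_{p+1} for 0 ≤ p ≤ n−1. For Γ₀, Σ₀ ∈ ℝ define f_{Γ₀,Σ₀} : ℝ → ℝ by f_{Γ₀,Σ₀}(x) = Σ_{p=0}^n β_p · (Γ₀ − (D−2)·x/(D·a·F))^p · (Σ₀ + 2(D−1)·x/(a·F))^{n−p}. Then the second derivative f''_{Γ₀,Σ₀}(x) vanishes for all x ∈ ℝ and all Γ₀, Σ₀ ∈ ℝ if and only if 2(D−1)(n−1−p)·α_p = ((D−2)/D)·(p+1)·α_{p+1} for every integer p with 0 ≤ p ≤ n−2. -/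

import Mathlib

/-!
Along the line `(u, v) = (Γ₀ - c x, Σ₀ + d x)`, the `x`-derivative of a binary form of degree
`m + 1` with coefficients `κ` is the binary form of degree `m` with coefficients
`d (m + 1 - p) κ p - c (p + 1) κ (p + 1)`. For the FLRW slopes `c = (D - 2) / (D a F)` and
`d = 2 (D - 1) / (a F)` these are `α p / (a F)` when `κ = β`, so `f''` is the form of degree
`n - 2` whose coefficients are the defects of the stated relations divided by `(a F)²`.
A binary form vanishes identically iff all its coefficients do.
-/

open Finset Polynomial

noncomputable section

def binaryForm (κ : ℕ → ℝ) (m : ℕ) (u v : ℝ) : ℝ :=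
  ∑ p ∈ range (m + 1), κ p * u ^ p * v ^ (m - p)

def derivCoeff (c d r : ℝ) (κ : ℕ → ℝ) (p : ℕ) : ℝ :=
  d * (r - p) * κ p - c * (p + 1) * κ (p + 1)

lemma derivCoeff_div_div (c d r s : ℝ) (κ : ℕ → ℝ) :
    derivCoeff (c / s) (d / s) r κ = fun p => derivCoeff c d r κ p / s := by
  funext p
  simp only [derivCoeff]
  ring

lemma derivCoeff_div_right (c d r s : ℝ) (κ : ℕ → ℝ) :
    derivCoeff c d r (fun p => κ p / s) = fun p => derivCoeff c d r κ p / s := by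
  funext p
  simp only [derivCoeff]
  ring

lemma sum_derivative_terms_eq_binaryForm (κ : ℕ → ℝ) (m : ℕ) (c d u v : ℝ) :
    ∑ p ∈ range (m + 1 + 1), κ p * ((p * u ^ (p - 1) * -c) * v ^ (m + 1 - p)
        + u ^ p * ((m + 1 - p : ℕ) * v ^ (m + 1 - p - 1) * d))
      = binaryForm (derivCoeff c d (m + 1 : ℕ) κ) m u v := by
  simp only [mul_add, sum_add_distrib]
  rw [sum_range_succ' _ (m + 1), sum_range_succ _ (m + 1)]
  simp only [binaryForm, derivCoeff, Nat.cast_zero, Nat.sub_self, zero_mul, mul_zero,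
    add_zero, ← sum_add_distrib]
  refine sum_congr rfl fun p hp => ?_
  have hpm : p ≤ m := Nat.lt_succ_iff.mp (mem_range.mp hp)
  rw [show m + 1 - (p + 1) = m - p by omega, show m + 1 - p - 1 = m - p by omega,
    Nat.add_sub_cancel, Nat.cast_sub (by omega : p ≤ m + 1)]
  push_cast
  ring

lemma hasDerivAt_binaryForm (κ : ℕ → ℝ) (m : ℕ) (c d G S x : ℝ) :
    HasDerivAt (fun x => binaryForm κ (m + 1) (G - c * x) (S + d * x))
      (binaryForm (derivCoeff c d (m + 1 : ℕ) κ) m (G - c * x) (S + d * x)) x := by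
  have hu : HasDerivAt (fun x => G - c * x) (-c) x := by
    simpa using ((hasDerivAt_id x).const_mul c).const_sub G
  have hv : HasDerivAt (fun x => S + d * x) d x := by
    simpa using ((hasDerivAt_id x).const_mul d).const_add S
  rw [← sum_derivative_terms_eq_binaryForm]
  unfold binaryForm
  exact HasDerivAt.fun_sum fun p _ => by
    simpa only [mul_assoc] using ((hu.fun_pow p).fun_mul (hv.fun_pow (m + 1 - p))).const_mul (κ p)

lemma deriv_binaryForm (κ : ℕ → ℝ) (m : ℕ) (c d G S : ℝ) :
    deriv (fun x => binaryForm κ (m + 1) (G - c * x) (S + d * x))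
      = fun x => binaryForm (derivCoeff c d (m + 1 : ℕ) κ) m (G - c * x) (S + d * x) :=
  funext fun x => (hasDerivAt_binaryForm κ m c d G S x).deriv

lemma binaryForm_one_right (κ : ℕ → ℝ) (m : ℕ) (u : ℝ) :
    binaryForm κ m u 1 = (∑ p ∈ range (m + 1), C (κ p) * X ^ p).eval u := by
  simp [binaryForm, eval_finsetSum]

lemma binaryForm_eq_zero_iff (κ : ℕ → ℝ) (m : ℕ) :
    (∀ u v, binaryForm κ m u v = 0) ↔ ∀ p ≤ m, κ p = 0 := by
  constructor
  · intro h p hp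
    have hpoly : ∑ q ∈ range (m + 1), C (κ q) * X ^ q = 0 :=
      Polynomial.funext fun u => by simpa [binaryForm_one_right] using h u 1
    simpa [finsetSum_coeff, coeff_C_mul, coeff_X_pow, Nat.lt_succ_iff.mpr hp] using
      congrArg (coeff · p) hpoly
  · intro h u v
    exact sum_eq_zero fun p hp => by
      rw [h p (Nat.lt_succ_iff.mp (mem_range.mp hp)), zero_mul, zero_mul]

lemma forall_binaryForm_affine_eq_zero_iff (κ : ℕ → ℝ) (m : ℕ) (c d : ℝ) :
    (∀ G S x, binaryForm κ m (G - c * x) (S + d * x) = 0) ↔ ∀ u v, binaryForm κ m u v = 0 :=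
  ⟨fun h u v => by simpa using h u v 0, fun h G S x => h _ _⟩

end

theorem stmt_6 (n D : ℕ) (hn : 2 ≤ n)
    (a F : ℝ) (ha : 0 < a) (hF : 0 < F) (β : ℕ → ℝ) :
    let α : ℕ → ℝ := fun p =>
      2 * ((D : ℝ) - 1) * ((n : ℝ) - (p : ℝ)) * β p
        - ((D : ℝ) - 2) / (D : ℝ) * ((p : ℝ) + 1) * β (p + 1)
    let f : ℝ → ℝ → ℝ → ℝ := fun G₀ S₀ x => ∑ p ∈ Finset.range (n + 1),
      β p * (G₀ - ((D : ℝ) - 2) * x / ((D : ℝ) * a * F)) ^ p *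
        (S₀ + 2 * ((D : ℝ) - 1) * x / (a * F)) ^ (n - p)
    (∀ G₀ S₀ x : ℝ, deriv (deriv (f G₀ S₀)) x = 0)
      ↔ (∀ p : ℕ, p + 2 ≤ n →
          2 * ((D : ℝ) - 1) * ((n : ℝ) - 1 - (p : ℝ)) * α p
            = ((D : ℝ) - 2) / (D : ℝ) * ((p : ℝ) + 1) * α (p + 1)) := by
  intro α f
  obtain ⟨m, rfl⟩ : ∃ m, n = m + 1 + 1 := ⟨n - 2, by omega⟩
  set c := ((D : ℝ) - 2) / D
  set d := 2 * ((D : ℝ) - 1)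
  set s := a * F
  have hs : s ≠ 0 := by positivity
  have hα : α = derivCoeff c d (m + 1 + 1 : ℕ) β := rfl
  have hf : ∀ G S, f G S = fun x => binaryForm β (m + 1 + 1) (G - c / s * x) (S + d / s * x) :=
    fun G S => funext fun x => sum_congr rfl fun p _ => by ring
  have hf'' : ∀ G S, deriv (deriv (f G S)) = fun x =>
      binaryForm (fun p => derivCoeff c d (m + 1 : ℕ) α p / s / s) m
        (G - c / s * x) (S + d / s * x) := by
    intro G S
    rw [hf, deriv_binaryForm, deriv_binaryForm, derivCoeff_div_div, derivCoeff_div_div,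
      derivCoeff_div_right, hα]
  simp only [hf'', forall_binaryForm_affine_eq_zero_iff, binaryForm_eq_zero_iff,
    div_eq_zero_iff, hs, or_false, derivCoeff, sub_eq_zero]
  refine forall_congr' fun p => ?_
  rw [show p + 2 ≤ m + 1 + 1 ↔ p ≤ m by omega]
  push_cast
  ring_nf
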